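/- arXiv:2203.16081 — 8 statements merged into one kernel-verified Lean document; each statement's English description precedes it below -/
import Mathlib

section
/- Let q be an odd prime power and m > 1 a divisor of q+1. In the generalised Paley graph GP(q^2, m), the number of m-ary lines of AG(2,q) passing through any given point is exactly (q+1)/m. -/
/-!
Lines through `a` with slopes `u, v ∈ Fˣ` coincide iff `u⁻¹ * v` lies in `𝔽_qˣ`, the kernel of
`x ↦ x ^ (q - 1)`. In the cyclic group `Fˣ` of order `(q + 1) * (q - 1)` this kernel is the group
of `(q + 1)`-th powers, which lies inside the group `P` of `m`-th powers. Hence the `m`-ary lines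
through `a` correspond to the cosets of `𝔽_qˣ` in `P`, and there are
`[Fˣ : 𝔽_qˣ] / [Fˣ : P] = (q + 1) / m` of them.
-/

open Subgroup

theorem Set.ncard_image_eq_relIndex {G β : Type*} [Group G] {H K : Subgroup G} {f : G → β}
    (hf : ∀ x y, f x = f y ↔ x⁻¹ * y ∈ K) : (f '' H).ncard = K.relIndex H := by
  have hker : Setoid.ker (fun x : H => f x) = QuotientGroup.leftRel (K.subgroupOf H) := by
    ext x y
    rw [Setoid.ker_def, QuotientGroup.leftRel_apply, mem_subgroupOf, hf, coe_mul, coe_inv]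
  rw [← Nat.card_coe_set_eq, Set.image_eq_range,
    ← Nat.card_congr (Setoid.quotientKerEquivRange _)]
  exact congrArg (fun r => Nat.card (Quotient r)) hker

namespace IsCyclic

variable {G : Type*} [CommGroup G] [IsCyclic G] [Finite G]

theorem ker_powMonoidHom_eq_range {d e : ℕ} (h : d * e = Nat.card G) :
    (powMonoidHom e : G →* G).ker = (powMonoidHom d : G →* G).range := by
  have hd : d ≠ 0 := by rintro rfl; rw [zero_mul] at h; exact Nat.card_pos.ne h
  have hle : (powMonoidHom d : G →* G).range ≤ (powMonoidHom e).ker := by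
    rintro _ ⟨x, rfl⟩
    simp only [MonoidHom.mem_ker, powMonoidHom_apply, ← pow_mul, h, pow_card_eq_one']
  refine (eq_of_le_of_card_ge hle ?_).symm
  rw [card_powMonoidHom_ker, card_powMonoidHom_range, ← h, Nat.gcd_mul_left_left,
    Nat.gcd_mul_right_left, Nat.mul_div_cancel_left _ (Nat.pos_of_ne_zero hd)]

theorem relIndex_range_powMonoidHom {d e : ℕ} (hde : d ∣ e) (he : e ∣ Nat.card G) :
    (powMonoidHom e : G →* G).range.relIndex (powMonoidHom d).range = e / d := by
  have hle : (powMonoidHom e : G →* G).range ≤ (powMonoidHom d).range := by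
    obtain ⟨k, rfl⟩ := hde
    rintro _ ⟨x, rfl⟩
    exact ⟨x ^ k, by simp only [powMonoidHom_apply, ← pow_mul, mul_comm]⟩
  have hd : 0 < d := Nat.pos_of_dvd_of_pos hde (Nat.pos_of_dvd_of_pos he Nat.card_pos)
  have := relIndex_mul_index hle
  rw [index_powMonoidHom_range, index_powMonoidHom_range, Nat.gcd_eq_right (hde.trans he),
    Nat.gcd_eq_right he] at this
  exact (Nat.div_eq_of_eq_mul_left hd this.symm).symm

end IsCyclic

theorem setOf_eq_image_range_powMonoidHom {G₀ β : Type*} [CommGroupWithZero G₀] (m : ℕ)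
    (ℓ : G₀ → β) :
    {L | ∃ b : G₀, b ≠ 0 ∧ (∃ y : G₀, y ≠ 0 ∧ y ^ m = b) ∧ L = ℓ b} =
      (fun u : G₀ˣ => ℓ u) '' (powMonoidHom m : G₀ˣ →* G₀ˣ).range := by
  ext L
  constructor
  · rintro ⟨_, -, ⟨y, hy, rfl⟩, rfl⟩
    exact ⟨Units.mk0 y hy ^ m, ⟨Units.mk0 y hy, rfl⟩, by simp⟩
  · rintro ⟨_, ⟨v, rfl⟩, rfl⟩
    exact ⟨_, Units.ne_zero _, ⟨v, v.ne_zero, by simp⟩, rfl⟩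

theorem Units.val_pow_eq_self_iff {M : Type*} [Monoid M] {q : ℕ} (hq : 0 < q) (w : Mˣ) :
    (w : M) ^ q = w ↔ w ^ (q - 1) = 1 := by
  rw [← Units.val_pow_eq_pow_val, Units.val_inj, ← mul_eq_right (a := w ^ (q - 1)), ← pow_succ,
    Nat.sub_add_cancel hq]

/-- The parameter `c` ranges over the fixed points of `x ↦ x ^ q`, which form `𝔽_q` when
`|R| = q ^ 2`. -/
def lineThrough {R : Type*} [Semiring R] (q : ℕ) (a b : R) : Set R :=
  {z | ∃ c : R, c ^ q = c ∧ z = a + c * b}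

theorem lineThrough_mul_subset {R : Type*} [CommSemiring R] {q : ℕ} (a b : R) {w : R}
    (hw : w ^ q = w) : lineThrough q a (w * b) ⊆ lineThrough q a b := by
  rintro _ ⟨c, hc, rfl⟩
  exact ⟨c * w, by rw [mul_pow, hc, hw], by rw [mul_assoc]⟩

section Field

variable {F : Type*} [Field F]

theorem lineThrough_mul {q : ℕ} (a b : F) {w : F} (hw₀ : w ≠ 0) (hw : w ^ q = w) :
    lineThrough q a (w * b) = lineThrough q a b := by
  refine (lineThrough_mul_subset a b hw).antisymm ?_
  simpa [inv_mul_cancel_left₀ hw₀] using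
    lineThrough_mul_subset a (w * b) (w := w⁻¹) (by rw [inv_pow, hw])

theorem lineThrough_units_eq_iff {q : ℕ} (hq : 0 < q) (a : F) (u v : Fˣ) :
    lineThrough q a (u : F) = lineThrough q a v ↔
      u⁻¹ * v ∈ (powMonoidHom (q - 1) : Fˣ →* Fˣ).ker := by
  rw [MonoidHom.mem_ker, powMonoidHom_apply, ← Units.val_pow_eq_self_iff hq]
  have hv : ((u⁻¹ * v : Fˣ) : F) * u = v := by
    rw [← Units.val_mul, mul_comm, mul_inv_cancel_left]
  constructor
  · intro h
    obtain ⟨c, hc, hcv⟩ : a + v ∈ lineThrough q a (u : F) := h ▸ ⟨1, one_pow q, by ring⟩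
    have hcw : c = ↑(u⁻¹ * v) :=
      mul_right_cancel₀ u.ne_zero (by rw [hv, ← add_right_inj a, hcv])
    rwa [← hcw]
  · intro hw
    rw [← hv, lineThrough_mul a _ (Units.ne_zero _) hw]

end Field

theorem number_of_mary_lines_through_point_general
    (q m : ℕ) (hdvd : m ∣ q + 1)
    (F : Type*) [Field F] [Fintype F] (hF : Fintype.card F = q ^ 2)
    (a : F) :
    Set.ncard {L : Set F | ∃ b : F, b ≠ 0 ∧ (∃ y : F, y ≠ 0 ∧ y ^ m = b) ∧
      L = {z : F | ∃ c : F, c ^ q = c ∧ z = a + c * b}} = (q + 1) / m := by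
  have hq : 0 < q := Nat.pos_of_ne_zero (by rintro rfl; simp at hF)
  have hcard : Nat.card Fˣ = (q + 1) * (q - 1) := by
    rw [Nat.card_units, Nat.card_eq_fintype_card, hF, ← Nat.sq_sub_sq, one_pow]
  change Set.ncard {L | ∃ b : F, b ≠ 0 ∧ (∃ y : F, y ≠ 0 ∧ y ^ m = b) ∧ L = lineThrough q a b} = _
  rw [setOf_eq_image_range_powMonoidHom,
    Set.ncard_image_eq_relIndex (lineThrough_units_eq_iff hq a),
    IsCyclic.ker_powMonoidHom_eq_range hcard.symm,
    IsCyclic.relIndex_range_powMonoidHom hdvd (hcard ▸ dvd_mul_right _ _)]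

/-- In `GP(q^2, m)` with `m > 1`, `m ∣ q+1`, the number of `m`-ary lines of
`AG(2,q)` through any given point `a` is exactly `(q+1)/m`. A line through `a` with slope
`b` is `{a + c*b : c ∈ F_q}`, and it is `m`-ary when `b` is an `m`-th power in `F_{q^2}^*`. -/
theorem number_of_mary_lines_through_point
    (q m : ℕ) (hq : ∃ p n : ℕ, p.Prime ∧ Odd p ∧ 0 < n ∧ q = p ^ n)
    (hm : 1 < m) (hdvd : m ∣ q + 1)
    (F : Type*) [Field F] [Fintype F] (hF : Fintype.card F = q ^ 2)
    (a : F) :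
    Set.ncard {L : Set F | ∃ b : F, b ≠ 0 ∧ (∃ y : F, y ≠ 0 ∧ y ^ m = b) ∧
      L = {z : F | ∃ c : F, c ^ q = c ∧ z = a + c * b}} = (q + 1) / m :=
  number_of_mary_lines_through_point_general q m hdvd F hF a
end

section
/- Let q be an odd prime power, m > 1 a divisor of q+1, and α ∈ F_{q^2} with α^2 = d a non-square in F_q^*. The line {cα : c ∈ F_q} is m-ary if and only if m divides (q+1)/2. -/
/-!
Since `d` is fixed by Frobenius but has no square root in `F_q`, the conjugate `α ^ q` of `α` is
`-α`, so `α ^ (q - 1) = -1`. As `F_{q^2}ˣ` is cyclic of order `(q - 1)(q + 1)`, `α` is an `m`-th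
power iff `α ^ ((q - 1)(q + 1) / m) = (-1) ^ ((q + 1) / m)` equals `1`, i.e. iff `(q + 1) / m` is
even.
-/

theorem IsCyclic.exists_pow_eq_iff_pow_card_div_eq_one {G : Type*} [Group G] [IsCyclic G]
    [Finite G] {m : ℕ} (hm : m ∣ Nat.card G) (a : G) :
    (∃ b : G, b ^ m = a) ↔ a ^ (Nat.card G / m) = 1 := by
  have hmul : m * (Nat.card G / m) = Nat.card G := Nat.mul_div_cancel' hm
  constructor
  · rintro ⟨b, rfl⟩
    rw [← pow_mul, hmul, pow_card_eq_one']
  · intro ha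
    obtain ⟨g, hg⟩ := IsCyclic.exists_generator (α := G)
    obtain ⟨k, rfl⟩ := mem_powers_iff_mem_zpowers.mpr (hg a)
    have hquot : 0 < Nat.card G / m :=
      Nat.div_pos (Nat.le_of_dvd Nat.card_pos hm) (Nat.pos_of_dvd_of_pos hm Nat.card_pos)
    have hk : orderOf g ∣ k * (Nat.card G / m) := orderOf_dvd_of_pow_eq_one (by rwa [pow_mul])
    rw [orderOf_eq_card_of_forall_mem_zpowers hg] at hk
    nth_rw 1 [← hmul] at hk
    obtain ⟨j, rfl⟩ := (Nat.mul_dvd_mul_iff_right hquot).mp hk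
    exact ⟨g ^ j, by rw [← pow_mul, mul_comm]⟩

theorem FiniteField.exists_pow_eq_iff_pow_card_sub_one_div_eq_one {F : Type*} [Field F]
    [Fintype F] {m : ℕ} (hm : m ∣ Fintype.card F - 1) {a : F} (ha : a ≠ 0) :
    (∃ γ : F, γ ≠ 0 ∧ γ ^ m = a) ↔ a ^ ((Fintype.card F - 1) / m) = 1 := by
  have hcard : Nat.card Fˣ = Fintype.card F - 1 := by
    rw [Nat.card_units, Nat.card_eq_fintype_card]
  rw [← hcard] at hm ⊢
  rw [← Units.val_mk0 ha, ← Units.val_pow_eq_pow_val, Units.val_eq_one,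
    ← IsCyclic.exists_pow_eq_iff_pow_card_div_eq_one hm]
  constructor
  · rintro ⟨γ, hγ, hpow⟩
    exact ⟨Units.mk0 γ hγ, Units.ext hpow⟩
  · rintro ⟨γ, hγ⟩
    exact ⟨γ, γ.ne_zero, by rw [← hγ, Units.val_pow_eq_pow_val]⟩

theorem pow_eq_neg_of_not_exists_fixed_sqrt {F : Type*} [Field F] {q : ℕ} {α : F}
    (hfix : (α ^ 2) ^ q = α ^ 2) (hns : ¬∃ s : F, s ^ q = s ∧ s ^ 2 = α ^ 2) :
    α ^ q = -α := by
  have hsq : (α ^ q) ^ 2 = α ^ 2 := by rw [← pow_mul, mul_comm, pow_mul, hfix]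
  rcases sq_eq_sq_iff_eq_or_eq_neg.mp hsq with h | h
  · exact absurd ⟨α, h, rfl⟩ hns
  · exact h

theorem pow_sub_one_eq_neg_one_of_pow_eq_neg {F : Type*} [Field F] {q : ℕ} {α : F}
    (hq : 0 < q) (hα : α ≠ 0) (h : α ^ q = -α) : α ^ (q - 1) = -1 := by
  refine mul_right_cancel₀ hα ?_
  rw [← pow_succ, Nat.sub_add_cancel hq, h, neg_one_mul]

theorem Nat.even_div_iff_dvd_div_two {n m : ℕ} (hm : m ∣ n) (h2 : 2 ∣ n) :
    Even (n / m) ↔ m ∣ n / 2 := by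
  rw [even_iff_two_dvd, Nat.dvd_div_iff_mul_dvd hm, Nat.dvd_div_iff_mul_dvd h2, mul_comm]

theorem alpha_line_mary_iff_general
    (q m : ℕ) (hq : ∃ p n : ℕ, p.Prime ∧ Odd p ∧ 0 < n ∧ q = p ^ n)
    (hdvd : m ∣ q + 1)
    (F : Type*) [Field F] [Fintype F] (hF : Fintype.card F = q ^ 2)
    (d α : F) (hdq : d ^ q = d) (hd0 : d ≠ 0)
    (hns : ¬∃ s : F, s ^ q = s ∧ s ^ 2 = d) (hα : α ^ 2 = d) :
    (∃ γ : F, γ ≠ 0 ∧ γ ^ m = α) ↔ m ∣ (q + 1) / 2 := by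
  subst hα
  have hqodd : Odd q := by
    obtain ⟨p, n, -, hp, -, rfl⟩ := hq
    exact hp.pow
  have hα0 : α ≠ 0 := by rintro rfl; simp at hd0
  have hαq : α ^ q = -α := pow_eq_neg_of_not_exists_fixed_sqrt hdq hns
  have hcard : Fintype.card F - 1 = (q - 1) * (q + 1) := by
    rw [hF, mul_comm, ← Nat.sq_sub_sq, one_pow]
  have hneg : (-1 : F) ≠ 1 := by
    refine Ring.neg_one_ne_one_of_char_ne_two fun hchar => ?_
    have := FiniteField.even_card_iff_char_two.mp hchar
    rw [hF, ← Nat.even_iff] at this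
    exact Nat.not_even_iff_odd.mpr hqodd.pow this
  rw [FiniteField.exists_pow_eq_iff_pow_card_sub_one_div_eq_one (hcard ▸ hdvd.mul_left _) hα0,
    hcard, Nat.mul_div_assoc _ hdvd, pow_mul,
    pow_sub_one_eq_neg_one_of_pow_eq_neg hqodd.pos hα0 hαq,
    neg_one_pow_eq_one_iff_even hneg, Nat.even_div_iff_dvd_div_two hdvd hqodd.add_one.two_dvd]

/-- With `α^2 = d` a non-square in `F_q^*`, the line `{cα : c ∈ F_q}` is
`m`-ary (its slope `α` is an `m`-th power in `F_{q^2}^*`) iff `m` divides `(q+1)/2`. -/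
theorem alpha_line_mary_iff
    (q m : ℕ) (hq : ∃ p n : ℕ, p.Prime ∧ Odd p ∧ 0 < n ∧ q = p ^ n)
    (hm : 1 < m) (hdvd : m ∣ q + 1)
    (F : Type*) [Field F] [Fintype F] (hF : Fintype.card F = q ^ 2)
    (d α : F) (hdq : d ^ q = d) (hd0 : d ≠ 0)
    (hns : ¬∃ s : F, s ^ q = s ∧ s ^ 2 = d) (hα : α ^ 2 = d) :
    (∃ γ : F, γ ≠ 0 ∧ γ ^ m = α) ↔ m ∣ (q + 1) / 2 :=
  alpha_line_mary_iff_general q m hq hdvd F hF d α hdq hd0 hns hα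
end

section
/- Let q be an odd prime power, m > 1 dividing q+1, β primitive in F_{q^2}, ω = β^{q-1}. For 0 ≤ t_1 < t_2 ≤ q, the elements ω^{t_1} and ω^{t_2} satisfy: ω^{t_2} - ω^{t_1} is an m-th power in F_{q^2}^* if and only if (q+1)/2 - (t_1 + t_2) ≡ 0 (mod m). -/
/-!
Write `q = p ^ n`. An element `x` with `x ^ (q + 1) = 1` satisfies `x ^ q = x⁻¹`, so Frobenius
gives `(x - y) ^ q = x⁻¹ - y⁻¹ = -(x - y) / (x * y)`, i.e. `(x - y) ^ (q - 1) = -(x * y)⁻¹`.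
For `x = ω ^ t₂`, `y = ω ^ t₁` and `-1 = ω ^ ((q + 1) / 2)` this reads `δ ^ (q - 1) = ω ^ e` with
`e = (q + 1) / 2 - (t₁ + t₂)`. Writing `δ = β ^ s`, comparing exponents of `β`, which has order
`(q - 1) * (q + 1)`, gives `s ≡ e [ZMOD q + 1]`; and `δ` is an `m`-th power iff `m ∣ s`, which for
`m ∣ q + 1` is equivalent to `m ∣ e`.
-/

section CyclicGroup

variable {G : Type*} [Group G] {β : G}

theorem exists_pow_eq_zpow_iff_dvd (hβ : ∀ u : G, u ∈ Subgroup.zpowers β) {m : ℕ}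
    (hm : m ∣ orderOf β) (s : ℤ) : (∃ y : G, y ^ m = β ^ s) ↔ (m : ℤ) ∣ s := by
  constructor
  · rintro ⟨y, hy⟩
    obtain ⟨r, rfl⟩ := Subgroup.mem_zpowers_iff.mp (hβ y)
    rw [← zpow_natCast, ← zpow_mul, zpow_eq_zpow_iff_modEq] at hy
    exact ((hy.of_dvd (Int.natCast_dvd_natCast.mpr hm)).dvd_iff).mp (dvd_mul_left _ _)
  · rintro ⟨k, rfl⟩
    exact ⟨β ^ k, by rw [← zpow_natCast, ← zpow_mul, mul_comm]⟩

theorem zpow_pow_eq_pow_zpow_iff_modEq {a b : ℕ} (hβ : orderOf β = a * b) (ha : a ≠ 0)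
    (s e : ℤ) : (β ^ s) ^ a = (β ^ a) ^ e ↔ s ≡ e [ZMOD b] := by
  rw [← zpow_natCast, ← zpow_mul, ← zpow_natCast β, ← zpow_mul, zpow_eq_zpow_iff_modEq, hβ,
    mul_comm s, Nat.cast_mul]
  exact Int.ModEq.mul_left_cancel_iff' (by exact_mod_cast ha)

end CyclicGroup

theorem IsPrimitiveRoot.pow_eq_neg_one {R : Type*} [CommRing R] [NoZeroDivisors R] {ζ : R}
    {k : ℕ} (h : IsPrimitiveRoot ζ (2 * k)) (hk : k ≠ 0) : ζ ^ k = -1 := by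
  have h2 := h.pow_of_dvd hk (dvd_mul_left k 2)
  rw [Nat.mul_div_cancel _ (Nat.pos_of_ne_zero hk)] at h2
  exact h2.eq_neg_one_of_two_right

theorem sub_pow_pred_mul_mul_eq_neg_one {F : Type*} [Field F] (p : ℕ) [ExpChar F p] (n : ℕ)
    {x y : F} (hxy : x ≠ y) (hx : x ^ (p ^ n + 1) = 1) (hy : y ^ (p ^ n + 1) = 1) :
    (x - y) ^ (p ^ n - 1) * (x * y) = -1 := by
  have hfrob : (x - y) ^ p ^ n * (x * y) = -1 * (x - y) := by
    rw [sub_pow_expChar_pow]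
    linear_combination y * hx - x * hy
  have hq : p ^ n ≠ 0 := pow_ne_zero _ (expChar_pos F p).ne'
  apply mul_right_cancel₀ (sub_ne_zero.mpr hxy)
  rw [← hfrob, ← pow_sub_one_mul hq]
  ring

theorem Units.pow_pred_eq_zpow_of_val_eq_pow_sub_pow {F : Type*} [Field F] (p : ℕ) [ExpChar F p]
    (n : ℕ) (hodd : Odd (p ^ n)) {ω : Fˣ} (hω : orderOf ω = p ^ n + 1) {δ : Fˣ} {t₁ t₂ : ℕ}
    (hδ : (δ : F) = ((ω ^ t₂ : Fˣ) : F) - ((ω ^ t₁ : Fˣ) : F)) :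
    δ ^ (p ^ n - 1) = ω ^ ((((p ^ n + 1) / 2 : ℕ) : ℤ) - ((t₁ : ℤ) + (t₂ : ℤ))) := by
  have hneg : (ω : F) ^ ((p ^ n + 1) / 2) = -1 := by
    refine IsPrimitiveRoot.pow_eq_neg_one ?_ (by have := hodd.pos; omega)
    rw [Nat.two_mul_div_two_of_even hodd.add_one, ← hω]
    exact IsPrimitiveRoot.coe_units_iff.mpr (IsPrimitiveRoot.orderOf ω)
  have hunit (t : ℕ) : ((ω ^ t : Fˣ) : F) ^ (p ^ n + 1) = 1 := by
    rw [← Units.val_pow_eq_pow_val, ← pow_mul, mul_comm, pow_mul, ← hω, pow_orderOf_eq_one,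
      one_pow, Units.val_one]
  have hne : ((ω ^ t₂ : Fˣ) : F) ≠ ((ω ^ t₁ : Fˣ) : F) := sub_ne_zero.mp (hδ ▸ δ.ne_zero)
  have hdiff := sub_pow_pred_mul_mul_eq_neg_one p n hne (hunit t₂) (hunit t₁)
  have hmul : δ ^ (p ^ n - 1) * ω ^ (t₁ + t₂) = ω ^ ((p ^ n + 1) / 2) := by
    ext
    push_cast [hδ, pow_add] at hdiff ⊢
    rw [hneg, ← hdiff]
    ring
  rw [zpow_sub, zpow_natCast, ← Nat.cast_add, zpow_natCast]
  exact eq_mul_inv_of_mul_eq hmul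

theorem oval_adjacency_criterion_general
    (q m : ℕ) (hq : ∃ p n : ℕ, p.Prime ∧ Odd p ∧ 0 < n ∧ q = p ^ n)
    (hdvd : m ∣ q + 1)
    (F : Type*) [Field F] [Fintype F] (hF : Fintype.card F = q ^ 2)
    (β : Fˣ) (hβ : ∀ u : Fˣ, u ∈ Subgroup.zpowers β)
    (t₁ t₂ : ℕ) (h12 : t₁ < t₂) (h2q : t₂ ≤ q) :
    (∃ δ : Fˣ, ((δ : F)) ^ m = (((β ^ (q - 1)) ^ t₂ : Fˣ) : F) - (((β ^ (q - 1)) ^ t₁ : Fˣ) : F)) ↔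
      (m : ℤ) ∣ ((((q + 1) / 2 : ℕ) : ℤ) - ((t₁ : ℤ) + (t₂ : ℤ))) := by
  obtain ⟨p, n, hp, hp_odd, hn, rfl⟩ := hq
  have : Fact p.Prime := ⟨hp⟩
  have : CharP F p := charP_of_card_eq_prime_pow (f := n * 2) (by rw [hF, pow_mul])
  have hq1 : p ^ n - 1 ≠ 0 := Nat.sub_ne_zero_of_lt (Nat.one_lt_pow hn.ne' hp.one_lt)
  have hordβ : orderOf β = (p ^ n - 1) * (p ^ n + 1) := by
    rw [orderOf_eq_card_of_forall_mem_zpowers hβ, Nat.card_units, Nat.card_eq_fintype_card, hF,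
      mul_comm, ← Nat.sq_sub_sq, one_pow]
  set q := p ^ n
  set ω := β ^ (q - 1)
  have hordω : orderOf ω = q + 1 := by
    rw [orderOf_pow_of_dvd hq1 (hordβ ▸ dvd_mul_right _ _), hordβ,
      Nat.mul_div_cancel_left _ (Nat.pos_of_ne_zero hq1)]
  have hne : ((ω ^ t₂ : Fˣ) : F) ≠ ((ω ^ t₁ : Fˣ) : F) := fun h =>
    h12.ne' (pow_injOn_Iio_orderOf (by rw [Set.mem_Iio, hordω]; omega)
      (by rw [Set.mem_Iio, hordω]; omega) (Units.ext h))
  set δ := Units.mk0 _ (sub_ne_zero.mpr hne)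
  have hδ := Units.pow_pred_eq_zpow_of_val_eq_pow_sub_pow p n hp_odd.pow hordω (δ := δ) rfl
  obtain ⟨s, hs⟩ := Subgroup.mem_zpowers_iff.mp (hβ δ)
  have hse := (zpow_pow_eq_pow_zpow_iff_modEq hordβ hq1 _ _).mp (by rw [hs, hδ])
  calc _ ↔ ∃ y : Fˣ, y ^ m = β ^ s := by simp [hs, δ, Units.ext_iff]
    _ ↔ (m : ℤ) ∣ s := exists_pow_eq_zpow_iff_dvd hβ (hordβ ▸ dvd_mul_of_dvd_right hdvd _) s
    _ ↔ _ := (hse.of_dvd (Int.natCast_dvd_natCast.mpr hdvd)).dvd_iff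

/-- For `ω = β^{q-1}` and `0 ≤ t₁ < t₂ ≤ q`, the difference
`ω^{t₂} - ω^{t₁}` is an `m`-th power in `F_{q^2}^*` iff
`(q+1)/2 - (t₁ + t₂) ≡ 0 (mod m)`. -/
theorem oval_adjacency_criterion
    (q m : ℕ) (hq : ∃ p n : ℕ, p.Prime ∧ Odd p ∧ 0 < n ∧ q = p ^ n)
    (hm : 1 < m) (hdvd : m ∣ q + 1)
    (F : Type*) [Field F] [Fintype F] (hF : Fintype.card F = q ^ 2)
    (β : Fˣ) (hβ : ∀ u : Fˣ, u ∈ Subgroup.zpowers β)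
    (t₁ t₂ : ℕ) (h12 : t₁ < t₂) (h2q : t₂ ≤ q) :
    (∃ δ : Fˣ, ((δ : F)) ^ m = (((β ^ (q - 1)) ^ t₂ : Fˣ) : F) - (((β ^ (q - 1)) ^ t₁ : Fˣ) : F)) ↔
      (m : ℤ) ∣ ((((q + 1) / 2 : ℕ) : ℤ) - ((t₁ : ℤ) + (t₂ : ℤ))) :=
  oval_adjacency_criterion_general q m hq hdvd F hF β hβ t₁ t₂ h12 h2q
end

section
/- Let q be an odd prime power, m ≥ 2 dividing q+1, ω = β^{q-1}, and write an arbitrary element of Q as ω^t with t = me + i, 0 ≤ i ≤ m-1. Then ω^t is an m-th power in F_{q^2}^* if and only if i = 0, or m is even and i = m/2. -/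
/-! Since `β` generates the cyclic group `Fˣ`, whose order `q² - 1` is divisible by `m`, the
`m`-th powers in `Fˣ` are exactly the `β ^ k` with `m ∣ k`. Hence `ω ^ t = β ^ ((q - 1) t)` is an
`m`-th power iff `m ∣ (q - 1) t`; as `q ≡ -1 [MOD m]` this means `m ∣ 2t`, i.e. `m ∣ 2i`, and
`0 ≤ 2i < 2m` leaves only `2i = 0` or `2i = m`. -/

open Subgroup

theorem exists_pow_eq_pow_iff_dvd {G : Type*} [Group G] {g : G} (hg : ∀ x, x ∈ zpowers g)
    {m : ℕ} (hm : m ∣ orderOf g) (k : ℕ) : (∃ δ : G, δ ^ m = g ^ k) ↔ m ∣ k := by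
  constructor
  · rintro ⟨δ, hδ⟩
    obtain ⟨s, rfl⟩ := hg δ
    have hmod : s * m ≡ k [ZMOD orderOf g] := by
      rw [← zpow_eq_zpow_iff_modEq, zpow_mul, zpow_natCast, hδ, zpow_natCast]
    have : (m : ℤ) ∣ k - s * m := (Int.natCast_dvd_natCast.mpr hm).trans hmod.dvd
    exact_mod_cast (dvd_sub_left (dvd_mul_left _ _)).mp this
  · rintro ⟨c, rfl⟩
    exact ⟨g ^ c, by rw [← pow_mul, mul_comm]⟩

theorem dvd_pred_mul_iff_dvd_two_mul {m q : ℕ} (h : m ∣ q + 1) (t : ℕ) :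
    m ∣ (q - 1) * t ↔ m ∣ 2 * t := by
  rcases q with _ | q
  · rw [Nat.dvd_one.mp h]
    simp
  · rw [add_tsub_cancel_right]
    have hsum : m ∣ q * t + 2 * t := by
      rw [← add_mul]
      exact h.mul_right t
    exact ⟨fun ha => (Nat.dvd_add_right ha).mp hsum, fun hb => (Nat.dvd_add_left hb).mp hsum⟩

theorem dvd_two_mul_iff_of_lt {m i : ℕ} (hi : i < m) :
    m ∣ 2 * i ↔ i = 0 ∨ (m % 2 = 0 ∧ i = m / 2) := by
  constructor
  · rintro ⟨c, hc⟩
    have : c < 2 := by nlinarith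
    interval_cases c <;> omega
  · rintro (rfl | ⟨hm, rfl⟩)
    · simp
    · exact ⟨1, by omega⟩

theorem oval_element_mth_power_iff_general
    (q m : ℕ) (hdvd : m ∣ q + 1)
    (F : Type*) [Field F] [Fintype F] (hF : Fintype.card F = q ^ 2)
    (β : Fˣ) (hβ : ∀ u : Fˣ, u ∈ Subgroup.zpowers β)
    (t e i : ℕ) (ht : t = m * e + i) (hi : i ≤ m - 1) :
    (∃ δ : Fˣ, δ ^ m = (β ^ (q - 1)) ^ t) ↔ (i = 0 ∨ (m % 2 = 0 ∧ i = m / 2)) := by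
  classical
  have horder : orderOf β = (q + 1) * (q - 1) := by
    rw [orderOf_eq_card_of_forall_mem_zpowers hβ, Nat.card_eq_fintype_card,
      Fintype.card_units, hF, ← Nat.sq_sub_sq, one_pow]
  have hm : 0 < m := Nat.pos_of_dvd_of_pos hdvd q.succ_pos
  have htwo : 2 * t = m * (2 * e) + 2 * i := by
    rw [ht]
    ring
  rw [← pow_mul, exists_pow_eq_pow_iff_dvd hβ (horder ▸ hdvd.mul_right _),
    dvd_pred_mul_iff_dvd_two_mul hdvd, htwo, Nat.dvd_add_right (dvd_mul_right _ _),
    dvd_two_mul_iff_of_lt (by omega)]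

/-- Write `ω = β^{q-1}` and `t = m*e + i` with `0 ≤ i ≤ m-1`. Then `ω^t`
is an `m`-th power in `F_{q^2}^*` iff `i = 0`, or `m` is even and `i = m/2`. -/
theorem oval_element_mth_power_iff
    (q m : ℕ) (hq : ∃ p n : ℕ, p.Prime ∧ Odd p ∧ 0 < n ∧ q = p ^ n)
    (hm : 2 ≤ m) (hdvd : m ∣ q + 1)
    (F : Type*) [Field F] [Fintype F] (hF : Fintype.card F = q ^ 2)
    (β : Fˣ) (hβ : ∀ u : Fˣ, u ∈ Subgroup.zpowers β)
    (t e i : ℕ) (ht : t = m * e + i) (hi : i ≤ m - 1) :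
    (∃ δ : Fˣ, δ ^ m = (β ^ (q - 1)) ^ t) ↔ (i = 0 ∨ (m % 2 = 0 ∧ i = m / 2)) :=
  oval_element_mth_power_iff_general q m hdvd F hF β hβ t e i ht hi
end

section
/- Let q be an odd prime power and m ≥ 3 with m | (q+1). Suppose Q_{i_1} ∪ Q_{i_2} induces a complete bipartite subgraph in GP(q^2,m) with parts Q_{i_1}, Q_{i_2} each of size (q+1)/m. Then the function f: F_{q^2} → ℝ defined by f(γ) = 1 if γ ∈ Q_{i_1}, f(γ) = -1 if γ ∈ Q_{i_2}, and f(γ) = 0 otherwise, is an eigenfunction of GP(q^2,m) corresponding to the eigenvalue -(q+1)/m, with support of cardinality 2(q+1)/m. -/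
open scoped Classical

/-- The coset `Q_i = ω^i ⟨ω^m⟩`, `ω = β^{q-1}`, viewed as a set of field elements. -/
def Qcoset (q m : ℕ) {F : Type*} [Field F] (β : Fˣ) (i : ℕ) : Set F :=
  {x | ∃ k : ℕ, x = (((β ^ (q - 1)) ^ (i + m * k) : Fˣ) : F)}

/-- Adjacency in `GP(q^2, m)`: the difference is a nonzero `m`-th power. -/
def AdjGP (m : ℕ) {F : Type*} [Field F] (x y : F) : Prop :=
  ∃ δ : Fˣ, ((δ : F)) ^ m = x - y

/-!
Write `φ x = x ^ q` for the Frobenius of `𝔽_{q²}` over `𝔽_q`. The cosets `Q_i` lie on the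
"unit circle" `φ x * x = 1`, a conic of `AG(2, q)` on which no three points are collinear. For
`x ∈ Q_{i₁}` the `(q+1)/m` differences `x - y`, `y ∈ Q_{i₂}`, are `m`-th powers lying on pairwise
distinct `𝔽_q`-lines through `0`; there are only `(q+1)/m` such lines, so every `m`-th power
direction is realised. Given `γ ∉ Q_{i₁} ∪ Q_{i₂}` and a neighbour `x ∈ Q_{i₁}` of `γ`, the line
through `γ` and `x` therefore meets `Q_{i₂}` in a point `y`, and `γ - y` is `γ - x` times a nonzero
element of `𝔽_q`, which is an `m`-th power since `m ∣ q + 1`. So `y` is a neighbour of `γ`, and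
`x ↦ y` is injective by the oval property: `γ` has as many neighbours in `Q_{i₁}` as in `Q_{i₂}`.
-/

open Finset

theorem IsCyclic.exists_pow_eq_of_pow_eq_one {G : Type*} [Group G] [Fintype G] [IsCyclic G]
    {m k : ℕ} (hmk : m * k ∣ Fintype.card G) {x : G} (hx : x ^ k = 1) : ∃ y, y ^ m = x := by
  obtain ⟨g, hg⟩ := IsCyclic.exists_monoid_generator (α := G)
  obtain ⟨a, rfl⟩ := Submonoid.mem_powers_iff _ _ |>.1 (hg x)
  have hk : 0 < k := Nat.pos_of_ne_zero <| by
    rintro rfl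
    simp at hmk
  have hcard : Fintype.card G ∣ a * k := by
    rw [← Nat.card_eq_fintype_card, ← orderOf_eq_card_of_forall_mem_powers hg,
      orderOf_dvd_iff_pow_eq_one, pow_mul, hx]
  obtain ⟨b, rfl⟩ := Nat.dvd_of_mul_dvd_mul_right hk (hmk.trans hcard)
  exact ⟨g ^ b, by rw [← pow_mul, mul_comm]⟩

section

variable {F : Type*} [Field F] {φ : F →+* F} {q : ℕ}

/-- No three points of the circle `φ x * x = 1` are collinear over the fixed field of `φ`. -/
theorem eq_of_sub_eq_mul_sub {a b c t : F} (ha : φ a * a = 1) (hb : φ b * b = 1)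
    (hc : φ c * c = 1) (ht : φ t = t) (hab : a ≠ b) (hac : a ≠ c)
    (h : b - a = t * (c - a)) : b = c := by
  have ha₀ := right_ne_zero_of_mul_eq_one ha
  have hb₀ := right_ne_zero_of_mul_eq_one hb
  have hc₀ := right_ne_zero_of_mul_eq_one hc
  have hφh : b⁻¹ - a⁻¹ = t * (c⁻¹ - a⁻¹) := by
    simpa only [map_sub, map_mul, ht, eq_inv_of_mul_eq_one_left ha,
      eq_inv_of_mul_eq_one_left hb, eq_inv_of_mul_eq_one_left hc] using congrArg φ h
  have hcross : c * (a - b) = t * b * (a - c) := by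
    field_simp at hφh
    linear_combination hφh
  have ht₀ : t ≠ 0 := by
    rintro rfl
    exact hab (by linear_combination -h)
  have hprod : t * (a - c) * (c - b) = 0 := by linear_combination hcross + c * h
  rcases mul_eq_zero.1 hprod with h' | h'
  · exact absurd (sub_eq_zero.1 ((mul_eq_zero.1 h').resolve_left ht₀)) hac
  · exact (sub_eq_zero.1 h').symm

theorem ne_zero_of_map_eq_pow (hφ : ∀ x, φ x = x ^ q) : q ≠ 0 := by
  rintro rfl
  simpa using hφ 0

theorem exists_map_eq_and_eq_mul_of_pow_eq_pow (hφ : ∀ x, φ x = x ^ q) {z w : F} (hw : w ≠ 0)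
    (h : z ^ (q - 1) = w ^ (q - 1)) : ∃ t, φ t = t ∧ z = t * w := by
  refine ⟨z / w, ?_, (div_mul_cancel₀ z hw).symm⟩
  have hw' : w ^ (q - 1) ≠ 0 := pow_ne_zero _ hw
  rw [hφ, ← Nat.sub_add_cancel (Nat.one_le_iff_ne_zero.2 (ne_zero_of_map_eq_pow hφ)), pow_succ,
    div_pow, h, div_self hw', one_mul]

theorem eq_of_sub_eq_mul_sub_of_sub_eq_mul_sub {x x' y γ t t' : F} (hx : φ x * x = 1)
    (hx' : φ x' * x' = 1) (hy : φ y * y = 1) (ht : φ t = t) (ht' : φ t' = t')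
    (hyx : y ≠ x) (hyx' : y ≠ x') (hγy : γ ≠ y)
    (h : x - y = t * (γ - x)) (h' : x' - y = t' * (γ - x')) : x = x' := by
  have e : (1 + t) * (x - y) = t * (γ - y) := by linear_combination h
  have e' : (1 + t') * (x' - y) = t' * (γ - y) := by linear_combination h'
  have ht₁ : 1 + t ≠ 0 := by
    intro h₀
    exact hγy (by linear_combination (γ - x) * h₀ + e)
  have ht'₀ : t' ≠ 0 := by
    rintro rfl
    exact hyx' (by linear_combination -h')
  set R := t * (1 + t') / ((1 + t) * t')
  have hR : φ R = R := by simp only [R, map_div₀, map_mul, map_add, map_one, ht, ht']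
  have hxR : x - y = R * (x' - y) := by
    rw [div_mul_eq_mul_div, eq_div_iff (mul_ne_zero ht₁ ht'₀)]
    linear_combination t' * e - t * e'
  exact eq_of_sub_eq_mul_sub hy hx hx' hR hyx hyx' hxR

end

section

variable {F : Type*} [Field F] [Fintype F] {q m : ℕ}

theorem exists_ringHom_eq_pow (hF : Fintype.card F = q ^ 2) :
    ∃ φ : F →+* F, ∀ x, φ x = x ^ q := by
  obtain ⟨p, _, n, hp, hcard⟩ := FiniteField.card' F
  obtain ⟨k, -, rfl⟩ := (Nat.dvd_prime_pow hp).1 (hcard ▸ hF ▸ dvd_pow_self q two_ne_zero)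
  have := Fact.mk hp
  exact ⟨iterateFrobenius F p k, iterateFrobenius_def p k⟩

theorem card_units_eq_mul (hF : Fintype.card F = q ^ 2) :
    Fintype.card Fˣ = (q + 1) * (q - 1) := by
  rw [Fintype.card_units, hF, ← Nat.sq_sub_sq, one_pow]

variable {φ : F →+* F}

theorem exists_pow_eq_of_map_eq (hF : Fintype.card F = q ^ 2) (hφ : ∀ x, φ x = x ^ q)
    (hdvd : m ∣ q + 1) {t : F} (ht₀ : t ≠ 0) (ht : φ t = t) : ∃ v : Fˣ, (v : F) ^ m = t := by
  have ht' : Units.mk0 t ht₀ ^ (q - 1) = 1 := by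
    refine Units.ext (mul_right_cancel₀ ht₀ ?_)
    rw [Units.val_pow_eq_pow_val, Units.val_mk0, ← pow_succ, Nat.sub_add_cancel
      (Nat.one_le_iff_ne_zero.2 (ne_zero_of_map_eq_pow hφ)), ← hφ, ht, Units.val_one, one_mul]
  obtain ⟨v, hv⟩ := IsCyclic.exists_pow_eq_of_pow_eq_one
    ((Nat.mul_dvd_mul_right hdvd (q - 1)).trans (card_units_eq_mul hF).symm.dvd) ht'
  exact ⟨v, by rw [← Units.val_pow_eq_pow_val, hv, Units.val_mk0]⟩

theorem map_mul_self_eq_one_of_mem_Qcoset (hF : Fintype.card F = q ^ 2) (hφ : ∀ x, φ x = x ^ q)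
    {β : Fˣ} {i : ℕ} {x : F} (hx : x ∈ Qcoset q m β i) : φ x * x = 1 := by
  obtain ⟨k, rfl⟩ := hx
  have hω : (β ^ (q - 1)) ^ (q + 1) = 1 := by
    rw [← pow_mul, mul_comm, ← card_units_eq_mul hF, pow_card_eq_one]
  rw [hφ, ← pow_succ, ← Units.val_pow_eq_pow_val, ← pow_mul, mul_comm, pow_mul, hω, one_pow,
    Units.val_one]

theorem pow_pow_sub_one_mem_nthRootsFinset (hF : Fintype.card F = q ^ 2) {s : ℕ}
    (hs : q + 1 = m * s) (u : Fˣ) :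
    ((u : F) ^ m) ^ (q - 1) ∈ Polynomial.nthRootsFinset s (1 : F) := by
  have hs₀ : 0 < s := Nat.pos_of_ne_zero (by rintro rfl; simp at hs)
  rw [Polynomial.mem_nthRootsFinset hs₀, ← pow_mul, ← pow_mul, ← Units.val_pow_eq_pow_val,
    show m * ((q - 1) * s) = (q + 1) * (q - 1) by rw [hs]; ring, ← card_units_eq_mul hF,
    pow_card_eq_one, Units.val_one]

theorem exists_mem_sub_eq_mul (hF : Fintype.card F = q ^ 2) (hφ : ∀ x, φ x = x ^ q)
    (hdvd : m ∣ q + 1) {B : Set F} (hB : ∀ y ∈ B, φ y * y = 1) (hcard : B.ncard = (q + 1) / m)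
    {x : F} (hx : φ x * x = 1) (hxB : x ∉ B) (hadj : ∀ y ∈ B, AdjGP m x y)
    {d : F} (hd : ∃ u : Fˣ, (u : F) ^ m = d) : ∃ y ∈ B, ∃ t, φ t = t ∧ x - y = t * d := by
  obtain ⟨s, hs⟩ := hdvd
  have hm : 0 < m := Nat.pos_of_ne_zero (by rintro rfl; simp at hs)
  rw [hs, Nat.mul_div_cancel_left s hm] at hcard
  have hne : ∀ y ∈ B, x ≠ y := fun y hy hxy => hxB (hxy ▸ hy)
  -- `z ↦ z ^ (q - 1)` separates the `𝔽_q`-lines through `0`, and sends `m`-th powers to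
  -- `s`-th roots of unity.
  have hmaps : ∀ y ∈ B, (x - y) ^ (q - 1) ∈ (Polynomial.nthRootsFinset s (1 : F) : Set F) := by
    intro y hy
    obtain ⟨u, hu⟩ := hadj y hy
    exact hu ▸ pow_pow_sub_one_mem_nthRootsFinset hF hs u
  have hinj : ∀ y y' (hy : y ∈ B) (hy' : y' ∈ B),
      (x - y) ^ (q - 1) = (x - y') ^ (q - 1) → y = y' := by
    intro y y' hy hy' h
    obtain ⟨t, ht, hxy⟩ := exists_map_eq_and_eq_mul_of_pow_eq_pow hφ
      (sub_ne_zero.2 (hne y' hy')) h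
    exact eq_of_sub_eq_mul_sub hx (hB y hy) (hB y' hy') ht (hne y hy) (hne y' hy')
      (by linear_combination -hxy)
  have hroots : (Polynomial.nthRootsFinset s (1 : F) : Set F).ncard ≤ B.ncard := by
    rw [Set.ncard_coe_finset, hcard, Polynomial.nthRootsFinset_def]
    exact (Multiset.toFinset_card_le _).trans (Polynomial.card_nthRoots _ _)
  obtain ⟨u, rfl⟩ := hd
  obtain ⟨y, hy, hyu⟩ := Set.surj_on_of_inj_on_of_ncard_le (fun y _ => (x - y) ^ (q - 1)) hmaps
    hinj hroots (Set.toFinite _) _ (pow_pow_sub_one_mem_nthRootsFinset hF hs u)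
  obtain ⟨t, ht, hxy⟩ :=
    exists_map_eq_and_eq_mul_of_pow_eq_pow hφ (pow_ne_zero _ u.ne_zero) hyu.symm
  exact ⟨y, hy, t, ht, hxy⟩

theorem adjGP_of_sub_eq_mul_sub (hF : Fintype.card F = q ^ 2) (hφ : ∀ x, φ x = x ^ q)
    (hdvd : m ∣ q + 1) {γ x y t : F} (hγx : AdjGP m γ x) (ht : φ t = t) (hγy : γ ≠ y)
    (h : x - y = t * (γ - x)) : AdjGP m γ y := by
  have hγy' : γ - y = (1 + t) * (γ - x) := by linear_combination h
  have ht₁ : 1 + t ≠ 0 := by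
    intro h₀
    exact hγy (sub_eq_zero.1 (by rw [hγy', h₀, zero_mul]))
  obtain ⟨v, hv⟩ := exists_pow_eq_of_map_eq hF hφ hdvd ht₁ (by simp only [map_add, map_one, ht])
  obtain ⟨u, hu⟩ := hγx
  exact ⟨v * u, by rw [Units.val_mul, mul_pow, hv, hu, hγy']⟩

theorem card_adj_and_mem_le (hF : Fintype.card F = q ^ 2) (hφ : ∀ x, φ x = x ^ q)
    (hdvd : m ∣ q + 1) {A B : Set F} (hA : ∀ x ∈ A, φ x * x = 1) (hB : ∀ y ∈ B, φ y * y = 1)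
    (hAB : Disjoint A B) (hcard : B.ncard = (q + 1) / m) (hadj : ∀ x ∈ A, ∀ y ∈ B, AdjGP m x y)
    {γ : F} (hγ : γ ∉ B) : #{δ | AdjGP m γ δ ∧ δ ∈ A} ≤ #{δ | AdjGP m γ δ ∧ δ ∈ B} := by
  set N : Finset F := {δ | AdjGP m γ δ ∧ δ ∈ A}
  have hN : ∀ x ∈ N, AdjGP m γ x ∧ x ∈ A := fun x hx => by simpa [N] using hx
  have hline : ∀ x ∈ N, ∃ y ∈ B, ∃ t, φ t = t ∧ x - y = t * (γ - x) := fun x hx =>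
    exists_mem_sub_eq_mul hF hφ hdvd hB hcard (hA x (hN x hx).2)
      (Set.disjoint_left.1 hAB (hN x hx).2) (hadj x (hN x hx).2) (hN x hx).1
  choose! g hgB t ht hxg using hline
  have hγg : ∀ x ∈ N, γ ≠ g x := fun x hx h => hγ (h ▸ hgB x hx)
  have hgx : ∀ x ∈ N, g x ≠ x := fun x hx h => Set.disjoint_left.1 hAB (hN x hx).2 (h ▸ hgB x hx)
  refine card_le_card_of_injOn g (fun x hx => ?_) (fun x hx x' hx' hxx' => ?_)
  · simpa using ⟨adjGP_of_sub_eq_mul_sub hF hφ hdvd (hN x hx).1 (ht x hx) (hγg x hx) (hxg x hx),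
      hgB x hx⟩
  · rw [mem_coe] at hx hx'
    exact eq_of_sub_eq_mul_sub_of_sub_eq_mul_sub (hA x (hN x hx).2) (hA x' (hN x' hx').2)
      (hB _ (hgB x hx)) (ht x hx) (ht x' hx') (hgx x hx) (hxx' ▸ hgx x' hx') (hγg x hx) (hxg x hx)
      (hxx' ▸ hxg x' hx')

end

section

variable {α : Type*} [Fintype α] {A B : Set α}

theorem card_filter_and_mem_eq_ncard {p : α → Prop} (h : ∀ δ ∈ A, p δ) :
    #{δ | p δ ∧ δ ∈ A} = A.ncard := by
  rw [← Set.ncard_coe_finset]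
  congr
  ext δ
  simpa using fun hδ => h δ hδ

theorem card_filter_and_mem_eq_zero {p : α → Prop} (h : ∀ δ ∈ A, ¬ p δ) :
    #{δ | p δ ∧ δ ∈ A} = 0 := by
  simpa [filter_eq_empty_iff] using fun δ hδ hA => h δ hA hδ

theorem sum_filter_eq_card_sub_card (hAB : Disjoint A B) {f : α → ℝ}
    (hf : ∀ γ, f γ = if γ ∈ A then 1 else if γ ∈ B then -1 else 0) (p : α → Prop) :
    ∑ δ ∈ univ.filter p, f δ = (#{δ | p δ ∧ δ ∈ A} : ℝ) - #{δ | p δ ∧ δ ∈ B} := by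
  have hf' : ∀ δ, f δ = (if δ ∈ A then 1 else 0) - (if δ ∈ B then 1 else 0) := by
    intro δ
    by_cases hA : δ ∈ A
    · simp [hf, hA, Set.disjoint_left.1 hAB hA]
    · by_cases hB : δ ∈ B <;> simp [hf, hA, hB]
  rw [sum_congr rfl fun δ _ => hf' δ, sum_sub_distrib, sum_boole, sum_boole, filter_filter,
    filter_filter]

theorem ncard_setOf_ne_zero_eq_add (hAB : Disjoint A B) {f : α → ℝ}
    (hf : ∀ γ, f γ = if γ ∈ A then 1 else if γ ∈ B then -1 else 0) :
    {γ | f γ ≠ 0}.ncard = A.ncard + B.ncard := by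
  have hsupp : {γ | f γ ≠ 0} = A ∪ B := by
    ext γ
    by_cases hA : γ ∈ A
    · simp [hf, hA]
    · by_cases hB : γ ∈ B <;> simp [hf, hA, hB]
  rw [hsupp, Set.ncard_union_eq hAB]

end

theorem WDB_tight_eigenfunction_general
    (q m : ℕ) (hdvd : m ∣ q + 1)
    (F : Type*) [Field F] [Fintype F] (hF : Fintype.card F = q ^ 2)
    (β : Fˣ) (i₁ i₂ : ℕ)
    (hdisj : Disjoint (Qcoset q m β i₁) (Qcoset q m β i₂))
    (hcard₁ : (Qcoset q m β i₁).ncard = (q + 1) / m)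
    (hcard₂ : (Qcoset q m β i₂).ncard = (q + 1) / m)
    (hbip : ∀ x ∈ Qcoset q m β i₁, ∀ y ∈ Qcoset q m β i₂, AdjGP m x y ∧ AdjGP m y x)
    (hind₁ : ∀ x ∈ Qcoset q m β i₁, ∀ y ∈ Qcoset q m β i₁, ¬ AdjGP m x y)
    (hind₂ : ∀ x ∈ Qcoset q m β i₂, ∀ y ∈ Qcoset q m β i₂, ¬ AdjGP m x y)
    (f : F → ℝ)
    (hf : ∀ γ : F, f γ =
      if γ ∈ Qcoset q m β i₁ then 1 else if γ ∈ Qcoset q m β i₂ then -1 else 0) :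
    f ≠ 0 ∧
    (∀ γ : F, (-(((q + 1) / m : ℕ) : ℝ)) * f γ =
      ∑ δ ∈ Finset.univ.filter (fun δ : F => AdjGP m γ δ), f δ) ∧
    {γ : F | f γ ≠ 0}.ncard = 2 * ((q + 1) / m) := by
  obtain ⟨φ, hφ⟩ := exists_ringHom_eq_pow hF
  have hQ : ∀ i, ∀ x ∈ Qcoset q m β i, φ x * x = 1 :=
    fun _ _ hx => map_mul_self_eq_one_of_mem_Qcoset hF hφ hx
  refine ⟨fun h₀ => ?_, fun γ => ?_,
    by rw [ncard_setOf_ne_zero_eq_add hdisj hf, hcard₁, hcard₂, two_mul]⟩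
  · obtain ⟨x, hx⟩ : (Qcoset q m β i₁).Nonempty := ⟨_, 0, rfl⟩
    have h := hf x
    rw [if_pos hx, h₀, Pi.zero_apply] at h
    exact zero_ne_one h
  rw [sum_filter_eq_card_sub_card hdisj hf, hf]
  by_cases hγ₁ : γ ∈ Qcoset q m β i₁
  · rw [card_filter_and_mem_eq_zero (hind₁ γ hγ₁),
      card_filter_and_mem_eq_ncard fun δ hδ => (hbip γ hγ₁ δ hδ).1, hcard₂, if_pos hγ₁]
    simp
  by_cases hγ₂ : γ ∈ Qcoset q m β i₂
  · rw [card_filter_and_mem_eq_ncard fun δ hδ => (hbip δ hδ γ hγ₂).2,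
      card_filter_and_mem_eq_zero (hind₂ γ hγ₂), hcard₁, if_neg hγ₁, if_pos hγ₂]
    simp
  have hbalanced := (card_adj_and_mem_le hF hφ hdvd (hQ i₁) (hQ i₂) hdisj hcard₂
    (fun x hx y hy => (hbip x hx y hy).1) hγ₂).antisymm
    (card_adj_and_mem_le hF hφ hdvd (hQ i₂) (hQ i₁) hdisj.symm hcard₁
      (fun x hx y hy => (hbip y hy x hx).2) hγ₁)
  rw [hbalanced, if_neg hγ₁, if_neg hγ₂]
  simp

/-- If `Q_{i₁} ∪ Q_{i₂}` induces a complete bipartite subgraph of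
`GP(q^2,m)` with parts of size `(q+1)/m`, then the `±1` indicator function of the two
parts is an eigenfunction for the eigenvalue `-(q+1)/m` with support of size `2(q+1)/m`. -/
theorem WDB_tight_eigenfunction
    (q m : ℕ) (hq : ∃ p n : ℕ, p.Prime ∧ Odd p ∧ 0 < n ∧ q = p ^ n)
    (hm : 3 ≤ m) (hdvd : m ∣ q + 1)
    (F : Type*) [Field F] [Fintype F] (hF : Fintype.card F = q ^ 2)
    (β : Fˣ) (hβ : ∀ u : Fˣ, u ∈ Subgroup.zpowers β)
    (i₁ i₂ : ℕ) (hi : i₁ ≠ i₂) (hi₁ : i₁ ≤ m - 1) (hi₂ : i₂ ≤ m - 1)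
    (hdisj : Disjoint (Qcoset q m β i₁) (Qcoset q m β i₂))
    (hcard₁ : (Qcoset q m β i₁).ncard = (q + 1) / m)
    (hcard₂ : (Qcoset q m β i₂).ncard = (q + 1) / m)
    (hbip : ∀ x ∈ Qcoset q m β i₁, ∀ y ∈ Qcoset q m β i₂, AdjGP m x y ∧ AdjGP m y x)
    (hind₁ : ∀ x ∈ Qcoset q m β i₁, ∀ y ∈ Qcoset q m β i₁, ¬ AdjGP m x y)
    (hind₂ : ∀ x ∈ Qcoset q m β i₂, ∀ y ∈ Qcoset q m β i₂, ¬ AdjGP m x y)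
    (f : F → ℝ)
    (hf : ∀ γ : F, f γ =
      if γ ∈ Qcoset q m β i₁ then 1 else if γ ∈ Qcoset q m β i₂ then -1 else 0) :
    f ≠ 0 ∧
    (∀ γ : F, (-(((q + 1) / m : ℕ) : ℝ)) * f γ =
      ∑ δ ∈ Finset.univ.filter (fun δ : F => AdjGP m γ δ), f δ) ∧
    {γ : F | f γ ≠ 0}.ncard = 2 * ((q + 1) / m) :=
  WDB_tight_eigenfunction_general q m hdvd F hF β i₁ i₂ hdisj hcard₁ hcard₂ hbip hind₁ hind₂ f hf
end

section
/- Let q be an odd prime power and m ≥ 2 divide (q+1)/2. Then {0} ∪ Q_0 is a clique of size (q+1+m)/m in GP(q^2,m), where Q_0 = ⟨ω^m⟩ and ω = β^{q-1} for a primitive element β of F_{q^2}. -/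
theorem IsCyclic.exists_pow_eq_of_pow_eq_one_s13 {G : Type*} [CommGroup G] [Finite G] [IsCyclic G]
    {m e : ℕ} (hme : m * e = Nat.card G) {y : G} (hy : y ^ e = 1) : ∃ z, z ^ m = y := by
  have hrange : (powMonoidHom m : G →* G).range = (powMonoidHom e).ker := by
    refine Subgroup.eq_of_le_of_card_ge ?_ ?_
    · rintro _ ⟨z, rfl⟩
      simp [← pow_mul, hme, pow_card_eq_one']
    · have hm : m ≠ 0 := by rintro rfl; exact Nat.card_pos.ne (by simpa using hme)
      rw [IsCyclic.card_powMonoidHom_range, IsCyclic.card_powMonoidHom_ker, ← hme,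
        Nat.gcd_mul_left_left, Nat.gcd_mul_right_left, Nat.mul_div_cancel_left _ (by omega)]
  exact (hrange ▸ hy : y ∈ (powMonoidHom m : G →* G).range)

theorem Nat.dvd_and_even_div_of_dvd_div_two {m n : ℕ} (hn : Even n) (h : m ∣ n / 2) :
    m ∣ n ∧ Even (n / m) := by
  obtain ⟨c, rfl⟩ := hn
  obtain ⟨d, hd⟩ : m ∣ c := by rwa [← two_mul, Nat.mul_div_cancel_left _ two_pos] at h
  rcases m.eq_zero_or_pos with rfl | hm
  · simp_all
  · refine ⟨⟨d + d, by rw [hd]; ring⟩, ⟨d, ?_⟩⟩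
    rw [hd, ← mul_add, Nat.mul_div_cancel_left _ hm]

theorem sub_one_pow_eq_neg_inv {K : Type*} [Field K] {p n : ℕ} [ExpChar K p] {x : K}
    (hx : x ^ (p ^ n + 1) = 1) (hx1 : x ≠ 1) : (x - 1) ^ (p ^ n - 1) = -x⁻¹ := by
  have hx0 : x ≠ 0 := by rintro rfl; simp at hx
  have hxinv : x ^ p ^ n = x⁻¹ := eq_inv_of_mul_eq_one_left (by rwa [← pow_succ])
  have hfrob : (x - 1) ^ p ^ n = x⁻¹ - 1 := by
    rw [sub_pow_expChar_pow, one_pow, hxinv]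
  have hpos : 0 < p ^ n := pow_pos (expChar_pos K p) n
  refine mul_right_cancel₀ (sub_ne_zero.mpr hx1) ?_
  rw [← pow_succ, Nat.sub_add_cancel hpos, hfrob]
  field_simp
  ring

theorem adjGP_of_sub_eq_mul {K : Type*} [Field K] {m : ℕ} {x y a b : K}
    (ha : ∃ δ : Kˣ, (δ : K) ^ m = a) (hb : ∃ δ : Kˣ, (δ : K) ^ m = b) (hxy : x - y = a * b) :
    AdjGP m x y := by
  obtain ⟨δa, rfl⟩ := ha
  obtain ⟨δb, rfl⟩ := hb
  exact ⟨δa * δb, by rw [Units.val_mul, mul_pow, hxy]⟩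

theorem Qcoset_zero_eq_image_powers {K : Type*} [Field K] {q m : ℕ} (β : Kˣ) :
    Qcoset q m β 0 = Units.val '' (Submonoid.powers ((β ^ (q - 1)) ^ m) : Set Kˣ) := by
  ext x
  simp only [Qcoset, zero_add, pow_mul, Submonoid.coe_powers, ← Set.range_comp, Set.mem_ofPred_eq,
    Set.mem_range, Function.comp_def, eq_comm]

section FiniteField

variable {K : Type*} [Field K] [Fintype K] {q m : ℕ}

theorem card_units_eq (hK : Fintype.card K = q ^ 2) : Nat.card Kˣ = (q - 1) * (q + 1) := by
  classical
  rw [Nat.card_eq_fintype_card, Fintype.card_units, hK, mul_comm, ← Nat.sq_sub_sq, one_pow]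

theorem exists_unit_pow_eq_of_pow_pow_eq_one (hK : Fintype.card K = q ^ 2) (hm : m ∣ q + 1)
    {y : K} (hy0 : y ≠ 0) (hy : (y ^ (q - 1)) ^ ((q + 1) / m) = 1) :
    ∃ δ : Kˣ, (δ : K) ^ m = y := by
  have hcard : m * ((q - 1) * ((q + 1) / m)) = Nat.card Kˣ := by
    rw [card_units_eq hK, Nat.mul_left_comm, Nat.mul_div_cancel' hm]
  obtain ⟨δ, hδ⟩ := IsCyclic.exists_pow_eq_of_pow_eq_one_s13 hcard (y := Units.mk0 y hy0)
    (Units.ext (by simpa [pow_mul] using hy))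
  exact ⟨δ, by simpa using congrArg Units.val hδ⟩

theorem exists_unit_pow_eq_neg_one (hK : Fintype.card K = q ^ 2) (hm : m ∣ q + 1)
    (heven : Even ((q + 1) / m)) : ∃ δ : Kˣ, (δ : K) ^ m = -1 :=
  exists_unit_pow_eq_of_pow_pow_eq_one hK hm (neg_ne_zero.mpr one_ne_zero) <| by
    rw [← pow_mul, mul_comm, pow_mul, heven.neg_one_pow, one_pow]

theorem exists_unit_pow_eq_of_pow_eq_one (hK : Fintype.card K = q ^ 2) (hm : m ∣ q + 1)
    {x : K} (hx : x ^ ((q + 1) / m) = 1) : ∃ δ : Kˣ, (δ : K) ^ m = x := by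
  have hx0 : x ≠ 0 := by
    rintro rfl
    have hpos : 0 < (q + 1) / m :=
      Nat.div_pos (Nat.le_of_dvd q.succ_pos hm) (Nat.pos_of_dvd_of_pos hm q.succ_pos)
    exact zero_ne_one ((zero_pow hpos.ne').symm.trans hx)
  exact exists_unit_pow_eq_of_pow_pow_eq_one hK hm hx0 <| by
    rw [← pow_mul, mul_comm, pow_mul, hx, one_pow]

theorem exists_unit_pow_eq_sub_one {p n : ℕ} [ExpChar K p] (hq : q = p ^ n)
    (hK : Fintype.card K = q ^ 2) (hm : m ∣ q + 1) (heven : Even ((q + 1) / m)) {x : K}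
    (hx : x ^ ((q + 1) / m) = 1) (hx1 : x ≠ 1) : ∃ δ : Kˣ, (δ : K) ^ m = x - 1 := by
  have hxq : x ^ (p ^ n + 1) = 1 := by
    rw [← hq, ← Nat.div_mul_cancel hm, pow_mul, hx, one_pow]
  refine exists_unit_pow_eq_of_pow_pow_eq_one hK hm (sub_ne_zero.mpr hx1) ?_
  rw [hq, sub_one_pow_eq_neg_inv hxq hx1, ← hq, heven.neg_pow, inv_pow, hx, inv_one]

theorem pairwise_adjGP_insert_zero {p n : ℕ} [ExpChar K p]
    (hq : q = p ^ n) (hK : Fintype.card K = q ^ 2) (hm : m ∣ q + 1)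
    (heven : Even ((q + 1) / m)) :
    Set.Pairwise (insert 0 {x : K | x ^ ((q + 1) / m) = 1}) (AdjGP m) := by
  have hpow {x : K} (hx : x ^ ((q + 1) / m) = 1) := exists_unit_pow_eq_of_pow_eq_one hK hm hx
  have hone : ∃ δ : Kˣ, (δ : K) ^ m = 1 := ⟨1, by simp⟩
  rintro x (rfl | (hx : x ^ _ = 1)) y (rfl | (hy : y ^ _ = 1)) hxy
  · exact absurd rfl hxy
  · exact adjGP_of_sub_eq_mul (exists_unit_pow_eq_neg_one hK hm heven) (hpow hy) (by ring)
  · exact adjGP_of_sub_eq_mul (hpow hx) hone (by ring)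
  · obtain ⟨δ, hδ⟩ := hpow hy
    have hy0 : y ≠ 0 := hδ ▸ pow_ne_zero m δ.ne_zero
    have hxy' : (x / y) ^ ((q + 1) / m) = 1 := by rw [div_pow, hx, hy, div_one]
    refine adjGP_of_sub_eq_mul (exists_unit_pow_eq_sub_one hq hK hm heven hxy' ?_) ⟨δ, hδ⟩ ?_
    · exact fun h => hxy ((div_eq_one_iff_eq hy0).mp h)
    · field_simp

theorem Qcoset_zero_subset_pow_eq_one (hK : Fintype.card K = q ^ 2) (hm : m ∣ q + 1) (β : Kˣ) :
    Qcoset q m β 0 ⊆ {x : K | x ^ ((q + 1) / m) = 1} := by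
  rintro _ ⟨k, rfl⟩
  have hexp : (q - 1) * ((0 + m * k) * ((q + 1) / m)) = Nat.card Kˣ * k := by
    have hmd := Nat.mul_div_cancel' hm
    generalize (q + 1) / m = d at hmd ⊢
    rw [card_units_eq hK, ← hmd]
    ring
  rw [Set.mem_ofPred_eq, ← Units.val_pow_eq_pow_val, ← pow_mul, ← pow_mul, hexp, pow_mul,
    pow_card_eq_one', one_pow, Units.val_one]

theorem ncard_Qcoset_zero (hK : Fintype.card K = q ^ 2) (hm : m ∣ q + 1) {β : Kˣ}
    (hβ : ∀ u : Kˣ, u ∈ Subgroup.zpowers β) : (Qcoset q m β 0).ncard = (q + 1) / m := by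
  have hq : 0 < q - 1 := by
    have := hK ▸ Fintype.one_lt_card (α := K)
    have : 1 < q := by nlinarith
    omega
  have hm0 : m ≠ 0 := ne_zero_of_dvd_ne_zero q.succ_ne_zero hm
  have hordβ : orderOf β = (q - 1) * (q + 1) := by
    rw [orderOf_eq_card_of_forall_mem_zpowers hβ, card_units_eq hK]
  rw [Qcoset_zero_eq_image_powers, Set.ncard_image_of_injective _ Units.val_injective,
    ← Nat.card_coe_set_eq, SetLike.coe_sort_coe, Nat.card_submonoidPowers, ← pow_mul,
    orderOf_pow_of_dvd (Nat.mul_ne_zero hq.ne' hm0) (hordβ ▸ Nat.mul_dvd_mul_left _ hm), hordβ,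
    Nat.mul_div_mul_left _ _ hq]

end FiniteField

theorem zero_union_Q0_clique_general
    (q m : ℕ) (hq : ∃ p n : ℕ, p.Prime ∧ Odd p ∧ 0 < n ∧ q = p ^ n)
    (hdvd : m ∣ (q + 1) / 2)
    (F : Type*) [Field F] [Fintype F] (hF : Fintype.card F = q ^ 2)
    (β : Fˣ) (hβ : ∀ u : Fˣ, u ∈ Subgroup.zpowers β) :
    Set.Pairwise ({(0 : F)} ∪ Qcoset q m β 0) (AdjGP m) ∧
    ({(0 : F)} ∪ Qcoset q m β 0).ncard = (q + 1 + m) / m := by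
  obtain ⟨p, n, hp, hp_odd, -, hq⟩ := hq
  have : Fact p.Prime := ⟨hp⟩
  have : CharP F p := charP_of_card_eq_prime_pow (by rw [hF, hq, ← pow_mul])
  obtain ⟨hm, heven⟩ := Nat.dvd_and_even_div_of_dvd_div_two (hq ▸ hp_odd.pow).add_one hdvd
  have hQ0 : (0 : F) ∉ Qcoset q m β 0 := fun ⟨_, h⟩ => Units.ne_zero _ h.symm
  rw [Set.singleton_union]
  refine ⟨(pairwise_adjGP_insert_zero hq hF hm heven).mono
    (Set.insert_subset_insert (Qcoset_zero_subset_pow_eq_one hF hm β)), ?_⟩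
  rw [Set.ncard_insert_of_notMem hQ0, ncard_Qcoset_zero hF hm hβ,
    Nat.add_div_right _ (Nat.pos_of_dvd_of_pos hm q.succ_pos)]

/-- If `m ≥ 2` divides `(q+1)/2` then `{0} ∪ Q_0` is a clique of size
`(q+1+m)/m` in `GP(q^2,m)`. -/
theorem zero_union_Q0_clique
    (q m : ℕ) (hq : ∃ p n : ℕ, p.Prime ∧ Odd p ∧ 0 < n ∧ q = p ^ n)
    (hm : 2 ≤ m) (hdvd : m ∣ (q + 1) / 2)
    (F : Type*) [Field F] [Fintype F] (hF : Fintype.card F = q ^ 2)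
    (β : Fˣ) (hβ : ∀ u : Fˣ, u ∈ Subgroup.zpowers β) :
    Set.Pairwise ({(0 : F)} ∪ Qcoset q m β 0) (AdjGP m) ∧
    ({(0 : F)} ∪ Qcoset q m β 0).ncard = (q + 1 + m) / m :=
  zero_union_Q0_clique_general q m hq hdvd F hF β hβ
end

section
/- Let q be an odd prime power, m ≥ 2 with m | (q+1), and α ∈ F_{q^2} with α^2 a non-square in F_q^*. If m does not divide (q+1)/2, then αQ_0 is a clique of size (q+1)/m in GP(q^2,m); if m divides (q+1)/2, then {0} ∪ αQ_0 is a clique of size (q+1+m)/m in GP(q^2,m). -/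
/-!
Write `r = (q + 1) / m`. Since `α ^ q = -α` and every `g ∈ Q_0` satisfies `g ^ q = g⁻¹`, the
Frobenius `x ↦ x ^ q` sends `z = α g - α h` to `z / (g h)`, so `z ^ (q - 1) = (g h)⁻¹` has order
dividing `r`. Hence `z ^ ((q ^ 2 - 1) / m) = 1`, which in the cyclic group `F_{q^2}^*` makes `z` an
`m`-th power. For the pair `0, α g` one gets `(α g) ^ (q - 1) = -g⁻²`, whose `r`-th power is
`(-1) ^ r`, equal to `1` exactly when `r` is even.
-/

theorem exists_pow_eq_of_pow_eq_one {G : Type*} [Group G] {β : G}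
    (hβ : ∀ u : G, u ∈ Subgroup.zpowers β) {m N : ℕ} (hN : N ≠ 0)
    (hord : orderOf β = m * N) {x : G} (hx : x ^ N = 1) : ∃ δ : G, δ ^ m = x := by
  obtain ⟨s, rfl : β ^ s = x⟩ := hβ x
  have hdvd : (m * N : ℤ) ∣ s * N := by
    exact_mod_cast hord ▸ orderOf_dvd_iff_zpow_eq_one.mpr (by rw [zpow_mul, zpow_natCast, hx])
  obtain ⟨t, rfl⟩ := (mul_dvd_mul_iff_right (by exact_mod_cast hN)).mp hdvd
  exact ⟨β ^ t, by rw [← zpow_natCast, ← zpow_mul, mul_comm]⟩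

theorem pow_sub_one_pow_eq_one {M : Type*} [MonoidWithZero M] [IsLeftCancelMulZero M]
    {q r : ℕ} {z c : M} (hz : z ≠ 0) (hzq : z ^ q = z * c) (hc : c ^ r = 1) :
    z ^ ((q - 1) * r) = 1 := by
  cases q with
  | zero => simp
  | succ k =>
    have hzk : z ^ k = c := mul_left_cancel₀ hz (by rwa [← pow_succ'])
    simpa [pow_mul, hzk] using hc

theorem pow_eq_inv_of_pow_eq_one {G : Type*} [Group G] {g : G} {q r : ℕ} (hrq : r ∣ q + 1)
    (hg : g ^ r = 1) : g ^ q = g⁻¹ := by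
  obtain ⟨k, hk⟩ := hrq
  exact eq_inv_of_mul_eq_one_left (by rw [← pow_succ, hk, pow_mul, hg, one_pow])

theorem orderOf_pow_pow_of_orderOf_eq {G : Type*} [Monoid G] {β : G} {a b c : ℕ}
    (hab : a * b ≠ 0) (hord : orderOf β = a * b * c) : orderOf ((β ^ a) ^ b) = c := by
  rw [← pow_mul, orderOf_pow_of_dvd hab (Dvd.intro c hord.symm), hord,
    Nat.mul_div_cancel_left c (Nat.pos_of_ne_zero hab)]

theorem Qcoset_zero_eq_range (q m : ℕ) {F : Type*} [Field F] (β : Fˣ) :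
    Qcoset q m β 0 = Set.range (fun k : ℕ ↦ ((((β ^ (q - 1)) ^ m) ^ k : Fˣ) : F)) := by
  ext x
  simp [Qcoset, pow_mul, eq_comm]

theorem Nat.even_of_dvd_half_succ {q m r : ℕ} (hq : Odd q) (hr : q + 1 = m * r)
    (h : m ∣ (q + 1) / 2) : Even r := by
  obtain ⟨t, ht⟩ := h
  have hm : m ≠ 0 := by rintro rfl; omega
  obtain ⟨e, rfl⟩ := hq
  exact ⟨t, Nat.eq_of_mul_eq_mul_left (Nat.pos_of_ne_zero hm) (by grind)⟩

section Field

variable {F : Type*} [Field F]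

theorem pow_eq_neg_of_not_exists_sqrt {q : ℕ} {d α : F} (hdq : d ^ q = d)
    (hns : ¬∃ s : F, s ^ q = s ∧ s ^ 2 = d) (hα : α ^ 2 = d) : α ^ q = -α := by
  have hsq : (α ^ q) ^ 2 = α ^ 2 := by rw [← pow_mul, mul_comm, pow_mul, hα, hdq]
  exact (sq_eq_sq_iff_eq_or_eq_neg.mp hsq).resolve_left fun h ↦ hns ⟨α, h, hα⟩

theorem orderOf_eq_of_card_eq_sq [Fintype F] {q m r : ℕ} (hF : Fintype.card F = q ^ 2)
    (hr : q + 1 = m * r) {β : Fˣ} (hβ : ∀ u : Fˣ, u ∈ Subgroup.zpowers β) :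
    orderOf β = m * ((q - 1) * r) := by
  rw [orderOf_eq_card_of_forall_mem_zpowers hβ, Nat.card_units, Nat.card_eq_fintype_card, hF,
    mul_left_comm, ← hr, mul_comm]
  simpa using Nat.sq_sub_sq q 1

theorem adjGP_of_sub_pow_eq_one [Fintype F] {m N : ℕ} {β : Fˣ}
    (hβ : ∀ u : Fˣ, u ∈ Subgroup.zpowers β) (hord : orderOf β = m * N) {x y : F}
    (h : (x - y) ^ N = 1) : AdjGP m x y := by
  have hN : N ≠ 0 := by rintro rfl; exact (orderOf_pos β).ne' (by simpa using hord)
  have hxy : x - y ≠ 0 := fun h0 ↦ by simp [h0, hN] at h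
  obtain ⟨δ, hδ⟩ := exists_pow_eq_of_pow_eq_one hβ hN hord
    (x := Units.mk0 _ hxy) (Units.ext (by simpa using h))
  exact ⟨δ, by simpa using congrArg Units.val hδ⟩

theorem adjGP_of_sub_pow_eq_mul [Fintype F] {q m r : ℕ} {β : Fˣ}
    (hβ : ∀ u : Fˣ, u ∈ Subgroup.zpowers β) (hord : orderOf β = m * ((q - 1) * r)) {x y : F}
    (hxy : x ≠ y) {c : Fˣ} (hc : c ^ r = 1) (h : (x - y) ^ q = (x - y) * c) : AdjGP m x y :=
  adjGP_of_sub_pow_eq_one hβ hord <|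
    pow_sub_one_pow_eq_one (sub_ne_zero.mpr hxy) h (by simpa using congrArg Units.val hc)

theorem mul_sub_mul_pow_eq {p n q : ℕ} [ExpChar F p] (hq : q = p ^ n) {α : F} (hα : α ^ q = -α)
    {g h : Fˣ} (hg : g ^ q = g⁻¹) (hh : h ^ q = h⁻¹) :
    (α * g - α * h) ^ q = (α * g - α * h) * ((g * h)⁻¹ : Fˣ) := by
  have hg' : (g : F) ^ q = (g : F)⁻¹ := by simpa using congrArg Units.val hg
  have hh' : (h : F) ^ q = (h : F)⁻¹ := by simpa using congrArg Units.val hh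
  rw [hq, sub_pow_expChar_pow, ← hq, mul_pow, mul_pow, hα, hg', hh']
  push_cast
  field_simp
  ring

theorem mul_pow_eq {q : ℕ} {α : F} (hα : α ^ q = -α) {g : Fˣ} (hg : g ^ q = g⁻¹) :
    (α * g) ^ q = α * g * ((-(g ^ 2)⁻¹ : Fˣ) : F) := by
  rw [mul_pow, hα, ← Units.val_pow_eq_pow_val, hg]
  simp only [Units.val_neg, Units.val_inv_eq_inv_val, Units.val_pow_eq_pow_val]
  field_simp

theorem ncard_image_mul_range_pow {α : F} (hα : α ≠ 0) (γ : Fˣ) :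
    ((α * ·) '' Set.range (fun k : ℕ ↦ ((γ ^ k : Fˣ) : F))).ncard = orderOf γ := by
  rw [Set.ncard_image_of_injective _ (mul_right_injective₀ hα)]
  change (Set.range (Units.val ∘ (γ ^ ·))).ncard = _
  rw [Set.range_comp, Set.ncard_image_of_injective _ Units.val_injective, ← Submonoid.coe_powers,
    ← Nat.card_coe_set_eq, SetLike.coe_sort_coe, Nat.card_submonoidPowers]

variable [Fintype F] {p n q m r : ℕ} [ExpChar F p]

theorem pairwise_adjGP_image_range_pow (hq : q = p ^ n) {β : Fˣ}
    (hβ : ∀ u : Fˣ, u ∈ Subgroup.zpowers β) (hord : orderOf β = m * ((q - 1) * r))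
    (hrq : r ∣ q + 1) {α : F} (hα : α ^ q = -α) {γ : Fˣ} (hγ : γ ^ r = 1) :
    ((α * ·) '' Set.range (fun k : ℕ ↦ ((γ ^ k : Fˣ) : F))).Pairwise (AdjGP m) := by
  rintro _ ⟨_, ⟨i, rfl⟩, rfl⟩ _ ⟨_, ⟨j, rfl⟩, rfl⟩ hne
  have hpow (k : ℕ) : (γ ^ k) ^ r = 1 := by rw [pow_right_comm, hγ, one_pow]
  refine adjGP_of_sub_pow_eq_mul hβ hord hne ?_ (mul_sub_mul_pow_eq hq hα
    (pow_eq_inv_of_pow_eq_one hrq (hpow i)) (pow_eq_inv_of_pow_eq_one hrq (hpow j)))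
  rw [inv_pow, mul_pow, hpow, hpow, mul_one, inv_one]

theorem pairwise_adjGP_insert_zero_s14 (hq : q = p ^ n) (hqodd : Odd q) {β : Fˣ}
    (hβ : ∀ u : Fˣ, u ∈ Subgroup.zpowers β) (hord : orderOf β = m * ((q - 1) * r))
    (hrq : r ∣ q + 1) (hr : Even r) {α : F} (hα : α ^ q = -α) {γ : Fˣ} (hγ : γ ^ r = 1) :
    (insert 0 ((α * ·) '' Set.range (fun k : ℕ ↦ ((γ ^ k : Fˣ) : F)))).Pairwise (AdjGP m) := by
  refine Set.pairwise_insert.mpr ⟨pairwise_adjGP_image_range_pow hq hβ hord hrq hα hγ, ?_⟩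
  rintro _ ⟨_, ⟨k, rfl⟩, rfl⟩ hne
  have hpow : (γ ^ k) ^ r = 1 := by rw [pow_right_comm, hγ, one_pow]
  have hpow_q := mul_pow_eq hα (pow_eq_inv_of_pow_eq_one hrq hpow)
  have hc : (-((γ ^ k) ^ 2)⁻¹) ^ r = 1 := by
    rw [hr.neg_pow, inv_pow, pow_right_comm, hpow, one_pow, inv_one]
  constructor
  · refine adjGP_of_sub_pow_eq_mul hβ hord hne hc ?_
    rw [zero_sub, hqodd.neg_pow, hpow_q]
    ring
  · refine adjGP_of_sub_pow_eq_mul hβ hord hne.symm hc ?_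
    simpa using hpow_q

end Field

theorem alphaQ0_clique_general
    (q m : ℕ) (hq : ∃ p n : ℕ, p.Prime ∧ Odd p ∧ 0 < n ∧ q = p ^ n)
    (hdvd : m ∣ q + 1)
    (F : Type*) [Field F] [Fintype F] (hF : Fintype.card F = q ^ 2)
    (β : Fˣ) (hβ : ∀ u : Fˣ, u ∈ Subgroup.zpowers β)
    (d α : F) (hdq : d ^ q = d) (hd0 : d ≠ 0)
    (hns : ¬∃ s : F, s ^ q = s ∧ s ^ 2 = d) (hα : α ^ 2 = d) :
    (¬ (m ∣ (q + 1) / 2) →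
      Set.Pairwise ((α * ·) '' Qcoset q m β 0) (AdjGP m) ∧
      ((α * ·) '' Qcoset q m β 0).ncard = (q + 1) / m) ∧
    ((m ∣ (q + 1) / 2) →
      Set.Pairwise ({(0 : F)} ∪ (α * ·) '' Qcoset q m β 0) (AdjGP m) ∧
      ({(0 : F)} ∪ (α * ·) '' Qcoset q m β 0).ncard = (q + 1 + m) / m) := by
  obtain ⟨p, n, hp, hpodd, hn, hqpn⟩ := hq
  obtain ⟨r, hr⟩ := hdvd
  have hm : 0 < m := Nat.pos_of_ne_zero (by rintro rfl; omega)
  have hqodd : Odd q := hqpn ▸ hpodd.pow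
  have hq1 : 1 < q := hqpn ▸ Nat.one_lt_pow hn.ne' hp.one_lt
  have : Fact p.Prime := ⟨hp⟩
  have : CharP F p := charP_of_card_eq_prime_pow (f := n * 2) (by rw [hF, hqpn, pow_mul])
  have hα0 : α ≠ 0 := by rintro rfl; exact hd0 (by simpa using hα.symm)
  have hαq : α ^ q = -α := pow_eq_neg_of_not_exists_sqrt hdq hns hα
  have hord : orderOf β = m * ((q - 1) * r) := orderOf_eq_of_card_eq_sq hF hr hβ
  have hγ : orderOf ((β ^ (q - 1)) ^ m) = r :=
    orderOf_pow_pow_of_orderOf_eq (Nat.mul_ne_zero (by omega) hm.ne') (by rw [hord]; ring)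
  have hγr : ((β ^ (q - 1)) ^ m) ^ r = 1 := hγ ▸ pow_orderOf_eq_one _
  have hrq : r ∣ q + 1 := Dvd.intro_left m hr.symm
  rw [Qcoset_zero_eq_range, Set.singleton_union]
  refine ⟨fun _ ↦ ⟨pairwise_adjGP_image_range_pow hqpn hβ hord hrq hαq hγr, ?_⟩,
    fun hhalf ↦ ⟨pairwise_adjGP_insert_zero_s14 hqpn hqodd hβ hord hrq
      (Nat.even_of_dvd_half_succ hqodd hr hhalf) hαq hγr, ?_⟩⟩
  · rw [ncard_image_mul_range_pow hα0, hγ, hr, Nat.mul_div_cancel_left _ hm]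
  · rw [Set.ncard_insert_of_notMem, ncard_image_mul_range_pow hα0, hγ,
      show q + 1 + m = m * (r + 1) by rw [hr]; ring, Nat.mul_div_cancel_left _ hm]
    rintro ⟨_, ⟨k, rfl⟩, h⟩
    exact mul_ne_zero hα0 (Units.ne_zero _) h

/-- With `α^2` a non-square in `F_q^*`: if `m ∤ (q+1)/2` then `αQ_0` is a
clique of size `(q+1)/m` in `GP(q^2,m)`; if `m ∣ (q+1)/2` then `{0} ∪ αQ_0` is a clique
of size `(q+1+m)/m`. -/
theorem alphaQ0_clique
    (q m : ℕ) (hq : ∃ p n : ℕ, p.Prime ∧ Odd p ∧ 0 < n ∧ q = p ^ n)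
    (hm : 2 ≤ m) (hdvd : m ∣ q + 1)
    (F : Type*) [Field F] [Fintype F] (hF : Fintype.card F = q ^ 2)
    (β : Fˣ) (hβ : ∀ u : Fˣ, u ∈ Subgroup.zpowers β)
    (d α : F) (hdq : d ^ q = d) (hd0 : d ≠ 0)
    (hns : ¬∃ s : F, s ^ q = s ∧ s ^ 2 = d) (hα : α ^ 2 = d) :
    (¬ (m ∣ (q + 1) / 2) →
      Set.Pairwise ((α * ·) '' Qcoset q m β 0) (AdjGP m) ∧
      ((α * ·) '' Qcoset q m β 0).ncard = (q + 1) / m) ∧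
    ((m ∣ (q + 1) / 2) →
      Set.Pairwise ({(0 : F)} ∪ (α * ·) '' Qcoset q m β 0) (AdjGP m) ∧
      ({(0 : F)} ∪ (α * ·) '' Qcoset q m β 0).ncard = (q + 1 + m) / m) :=
  alphaQ0_clique_general q m hq hdvd F hF β hβ d α hdq hd0 hns hα
end

section
/- Let q be an odd prime power and m a divisor of q+1 with 2 ≤ m ≤ (q+1)/3. Then gcd(q-1, (q+1)/m - 2) = gcd((q+1)/m - 2, 2(m-1)), and this quantity is at most √(2(q+1)) - 2. -/
/-! Writing `q + 1 = m k`, we have `q - 1 = (k - 2) m + 2 (m - 1)`, so the gcd is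
`g = gcd(k - 2, 2(m - 1))`. Hence `g + 2 ≤ min(k, 2m) ≤ √(k · 2m) = √(2(q + 1))`. -/

theorem Nat.gcd_mul_sub_two {m k : ℕ} (hm : 1 ≤ m) (hk : 2 ≤ k) :
    Nat.gcd (m * k - 2) (k - 2) = Nat.gcd (k - 2) (2 * (m - 1)) := by
  have hsplit : m * k - 2 = 2 * (m - 1) + (k - 2) * m := by
    obtain ⟨m', rfl⟩ := Nat.exists_eq_add_of_le hm
    obtain ⟨k', rfl⟩ := Nat.exists_eq_add_of_le hk
    simp only [Nat.add_sub_cancel_left]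
    ring_nf
    omega
  rw [hsplit, Nat.gcd_comm, Nat.gcd_add_mul_left_right]

theorem Real.min_le_sqrt_mul {a b : ℝ} (ha : 0 ≤ a) (hb : 0 ≤ b) : min a b ≤ √(a * b) :=
  Real.le_sqrt_of_sq_le <| by
    rw [sq]
    exact mul_le_mul (min_le_left a b) (min_le_right a b) (le_min ha hb) ha

theorem gcd_computation_general
    (q m : ℕ)
    (hdvd : m ∣ q + 1) (hm2 : 2 ≤ m) (hm3 : 3 * m ≤ q + 1) :
    Nat.gcd (q - 1) ((q + 1) / m - 2) = Nat.gcd ((q + 1) / m - 2) (2 * (m - 1)) ∧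
    (Nat.gcd (q - 1) ((q + 1) / m - 2) : ℝ) ≤ Real.sqrt (2 * (q + 1)) - 2 := by
  obtain ⟨k, hqk⟩ := hdvd
  have hdiv : (q + 1) / m = k := by rw [hqk, Nat.mul_div_cancel_left _ (by omega)]
  have hk : 3 ≤ k := Nat.le_of_mul_le_mul_left (by linarith : m * 3 ≤ m * k) (by omega)
  have hgcd : Nat.gcd (q - 1) (k - 2) = Nat.gcd (k - 2) (2 * (m - 1)) := by
    rw [show q - 1 = m * k - 2 by omega, Nat.gcd_mul_sub_two (by omega) (by omega)]
  rw [hdiv, hgcd]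
  refine ⟨rfl, ?_⟩
  set g := Nat.gcd (k - 2) (2 * (m - 1))
  have hgk : g + 2 ≤ k := by
    have := Nat.gcd_le_left (2 * (m - 1)) (by omega : 0 < k - 2); omega
  have hgm : g + 2 ≤ 2 * m := by
    have := Nat.gcd_le_right (k - 2) (by omega : 0 < 2 * (m - 1)); omega
  have hprod : (2 * (q + 1) : ℝ) = k * (2 * m) := by
    rw [show (q : ℝ) + 1 = (q + 1 : ℕ) by push_cast; ring, hqk]
    push_cast; ring
  calc (g : ℝ) = (g + 2 : ℕ) - 2 := by push_cast; ring
    _ ≤ min (k : ℝ) (2 * m) - 2 := by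
      gcongr
      exact le_min (by exact_mod_cast hgk) (by exact_mod_cast hgm)
    _ ≤ √(2 * (q + 1)) - 2 := by
      rw [hprod]
      gcongr
      exact Real.min_le_sqrt_mul (by positivity) (by positivity)

/-- For an odd prime power `q` and `m ∣ q+1` with `2 ≤ m ≤ (q+1)/3`,
`gcd(q-1, (q+1)/m - 2) = gcd((q+1)/m - 2, 2(m-1))`, and this quantity is at most
`√(2(q+1)) - 2`. -/
theorem gcd_computation
    (q m : ℕ) (hq : ∃ p n : ℕ, p.Prime ∧ Odd p ∧ 0 < n ∧ q = p ^ n)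
    (hdvd : m ∣ q + 1) (hm2 : 2 ≤ m) (hm3 : 3 * m ≤ q + 1) :
    Nat.gcd (q - 1) ((q + 1) / m - 2) = Nat.gcd ((q + 1) / m - 2) (2 * (m - 1)) ∧
    (Nat.gcd (q - 1) ((q + 1) / m - 2) : ℝ) ≤ Real.sqrt (2 * (q + 1)) - 2 :=
  gcd_computation_general q m hdvd hm2 hm3
end
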